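/- arXiv:1607.02631 — 6 statements merged into one kernel-verified Lean document; each statement's English description precedes it below -/
import Mathlib

section
/- Let R be a random variable taking values in a finite set of patterns {1,...,J} and L a random variable on a finite set, with P(R=1, L=l) > 0 for all l. Define Odds_r(l) = P(R=r | L=l) / P(R=1 | L=l). Then the joint mass function factorizes as P(R=r, L=l) = Odds_r(l) * P(L=l | R=1) / C, where C = Σ_{r', l'} Odds_{r'}(l') * P(L=l' | R=1) (with Odds_1(l) = 1). -/
open Finset MeasureTheory

open Classical in
noncomputable def pr {Ω : Type*} [Fintype Ω] (P : Ω → ℝ) (E : Ω → Prop) : ℝ :=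
  ∑ ω, if E ω then P ω else 0

noncomputable def cpr {Ω : Type*} [Fintype Ω] (P : Ω → ℝ) (E F : Ω → Prop) : ℝ :=
  pr P (fun ω => E ω ∧ F ω) / pr P F

noncomputable def ex {Ω : Type*} [Fintype Ω] (P : Ω → ℝ) (U : Ω → ℝ) : ℝ :=
  ∑ ω, P ω * U ω

open Classical in
noncomputable def cex {Ω : Type*} [Fintype Ω] (P : Ω → ℝ) (U : Ω → ℝ) (F : Ω → Prop) : ℝ :=
  (∑ ω, if F ω then P ω * U ω else 0) / pr P F

lemma pr_congr' {Ω : Type*} [Fintype Ω] (P : Ω → ℝ) (E F : Ω → Prop)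
    (h : ∀ ω, E ω ↔ F ω) : pr P E = pr P F := by
  unfold pr; exact Finset.sum_congr rfl (fun ω _ => by rw [propext (h ω)])

lemma pr_sum_fiber {Ω B : Type*} [Fintype Ω] [Fintype B] (P : Ω → ℝ)
    (f : Ω → B) (E : Ω → Prop) :
    ∑ b : B, pr P (fun ω => E ω ∧ f ω = b) = pr P E := by
  classical
  unfold pr
  rw [Finset.sum_comm]
  refine Finset.sum_congr rfl fun ω _ => ?_
  by_cases hE : E ω <;> simp [hE]

lemma pr_mono' {Ω : Type*} [Fintype Ω] (P : Ω → ℝ) (hP : ∀ ω, 0 ≤ P ω)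
    (E F : Ω → Prop) (h : ∀ ω, E ω → F ω) : pr P E ≤ pr P F := by
  classical
  unfold pr
  apply Finset.sum_le_sum
  intro ω _
  by_cases hE : E ω
  · simp [hE, h ω hE]
  · simp only [hE, if_false]
    split <;> simp [hP ω]

/-- Generalized odds-ratio factorization of the joint law of (R, L).
Patterns are `Fin (J+1)` with `0` the complete-case pattern. -/
theorem stmt0 {Ω A : Type*} [Fintype Ω] [Fintype A] (J : ℕ)
    (P : Ω → ℝ) (hP : ∀ ω, 0 ≤ P ω) (hPsum : ∑ ω, P ω = 1)
    (R : Ω → Fin (J + 1)) (L : Ω → A)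
    (hpos : ∀ l : A, 0 < pr P (fun ω => R ω = 0 ∧ L ω = l))
    (Odds : Fin (J + 1) → A → ℝ)
    (hOdds : ∀ r l, Odds r l =
      cpr P (fun ω => R ω = r) (fun ω => L ω = l) /
        cpr P (fun ω => R ω = 0) (fun ω => L ω = l)) :
    ∀ (r : Fin (J + 1)) (l : A),
      pr P (fun ω => R ω = r ∧ L ω = l) =
        Odds r l * cpr P (fun ω => L ω = l) (fun ω => R ω = 0) /
          ∑ r' : Fin (J + 1), ∑ l' : A,
            Odds r' l' * cpr P (fun ω => L ω = l') (fun ω => R ω = 0) := by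
  classical
  intro r l
  -- positivity facts
  have hpL : ∀ l' : A, 0 < pr P (fun ω => L ω = l') := fun l' =>
    lt_of_lt_of_le (hpos l') (pr_mono' P hP _ _ (fun ω h => h.2))
  have hpR0 : 0 < pr P (fun ω => R ω = 0) :=
    lt_of_lt_of_le (hpos l) (pr_mono' P hP _ _ (fun ω h => h.1))
  -- each term of the sum
  have hterm : ∀ (r' : Fin (J + 1)) (l' : A),
      Odds r' l' * cpr P (fun ω => L ω = l') (fun ω => R ω = 0) =
        pr P (fun ω => R ω = r' ∧ L ω = l') / pr P (fun ω => R ω = 0) := by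
    intro r' l'
    have hcomm : pr P (fun ω => L ω = l' ∧ R ω = 0)
        = pr P (fun ω => R ω = 0 ∧ L ω = l') :=
      pr_congr' P _ _ (fun ω => and_comm)
    rw [hOdds r' l']
    unfold cpr
    rw [hcomm]
    have h1 : pr P (fun ω => L ω = l') ≠ 0 := (hpL l').ne'
    have h2 : pr P (fun ω => R ω = 0 ∧ L ω = l') ≠ 0 := (hpos l').ne'
    have h3 : pr P (fun ω => R ω = 0) ≠ 0 := hpR0.ne'
    field_simp
  -- sum of joints is 1
  have hsum1 : ∑ r' : Fin (J + 1), ∑ l' : A,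
      pr P (fun ω => R ω = r' ∧ L ω = l') = 1 := by
    have h1 : ∀ r' : Fin (J+1), ∑ l' : A, pr P (fun ω => R ω = r' ∧ L ω = l')
        = pr P (fun ω => R ω = r') := fun r' => pr_sum_fiber P L _
    rw [Finset.sum_congr rfl (fun r' _ => h1 r')]
    have h2 : ∑ r' : Fin (J+1), pr P (fun ω => R ω = r') = pr P (fun _ => True) := by
      rw [← pr_sum_fiber P R (fun _ => True)]
      exact Finset.sum_congr rfl (fun r' _ => pr_congr' P _ _ (fun ω => by simp))
    rw [h2]
    unfold pr
    simpa using hPsum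
  have hden : ∑ r' : Fin (J + 1), ∑ l' : A,
      Odds r' l' * cpr P (fun ω => L ω = l') (fun ω => R ω = 0)
        = 1 / pr P (fun ω => R ω = 0) := by
    calc _ = ∑ r' : Fin (J+1), ∑ l' : A,
          pr P (fun ω => R ω = r' ∧ L ω = l') / pr P (fun ω => R ω = 0) := by
            exact Finset.sum_congr rfl (fun r' _ =>
              Finset.sum_congr rfl (fun l' _ => hterm r' l'))
      _ = (∑ r' : Fin (J+1), ∑ l' : A,
          pr P (fun ω => R ω = r' ∧ L ω = l')) / pr P (fun ω => R ω = 0) := by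
            simp_rw [← Finset.sum_div]
      _ = 1 / pr P (fun ω => R ω = 0) := by rw [hsum1]
  rw [hterm r l, hden]
  field_simp
end

section
/- If ε_1,...,ε_J are i.i.d. standard Gumbel (extreme value) random variables and μ_1,...,μ_J are real constants, then P(μ_r + ε_r > μ_s + ε_s for all s ≠ r) = exp(μ_r) / Σ_{s=1}^J exp(μ_s). Equivalently, ∫ Π_{s≠r} F(μ_r - μ_s + ε) dF(ε) = exp(μ_r)/Σ_s exp(μ_s) where F(x) = exp(-exp(-x)) is the standard Gumbel CDF. -/
open MeasureTheory Set Real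

private lemma gumbel_hasDerivWithinAt (s : Set ℝ) :
    ∀ x ∈ s, HasDerivWithinAt (fun y : ℝ => rexp (-y)) (-rexp (-x)) s x := by
  intro x _
  have h : HasDerivAt (fun y : ℝ => rexp (-y)) (rexp (-x) * (-1)) x :=
    (Real.hasDerivAt_exp (-x)).comp x (hasDerivAt_neg x)
  simpa [mul_neg_one] using h.hasDerivWithinAt

private lemma gumbel_injOn (s : Set ℝ) : Set.InjOn (fun y : ℝ => rexp (-y)) s :=
  fun a _ b _ h => by
    have := Real.exp_injective h
    linarith [neg_injective this]

private lemma gumbel_image_univ : (fun y : ℝ => rexp (-y)) '' univ = Ioi 0 := by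
  rw [show (fun y : ℝ => rexp (-y)) = rexp ∘ Neg.neg from rfl, Set.image_comp,
    Set.image_univ_of_surjective neg_surjective, Set.image_univ, Real.range_exp]

private lemma gumbel_image_Iio (a : ℝ) :
    (fun y : ℝ => rexp (-y)) '' Iio a = Ioi (rexp (-a)) := by
  ext t
  simp only [mem_image, mem_Iio, mem_Ioi]
  constructor
  · rintro ⟨x, hx, rfl⟩
    exact Real.exp_lt_exp.2 (by linarith)
  · intro ht
    have h0 : 0 < t := lt_trans (Real.exp_pos _) ht
    refine ⟨-Real.log t, ?_, by rw [neg_neg, Real.exp_log h0]⟩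
    have := Real.log_lt_log (Real.exp_pos _) ht
    rw [Real.log_exp] at this
    linarith

private lemma integral_Ioi_exp_neg_mul (c a : ℝ) (hc : 0 < c) :
    ∫ x in Ioi a, rexp (-(c * x)) = c⁻¹ * rexp (-(c * a)) := by
  rw [show (fun x : ℝ => rexp (-(c * x))) = fun x => (fun u => rexp (-u)) (c * x) from rfl,
    integral_comp_mul_left_Ioi (fun u => rexp (-u)) a hc, integral_exp_neg_Ioi, smul_eq_mul]

private lemma key_setIntegral (c a : ℝ) (hc : 0 < c) :
    ∫ x in Iio a, rexp (-x) * rexp (-(c * rexp (-x))) = c⁻¹ * rexp (-(c * rexp (-a))) := by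
  have h := integral_image_eq_integral_abs_deriv_smul (measurableSet_Iio (a := a))
    (gumbel_hasDerivWithinAt (Iio a)) (gumbel_injOn (Iio a)) (fun t => rexp (-(c * t)))
  rw [gumbel_image_Iio, integral_Ioi_exp_neg_mul c _ hc] at h
  rw [h]
  refine integral_congr_ae (Filter.Eventually.of_forall fun x => ?_)
  simp [abs_of_pos (Real.exp_pos (-x)), smul_eq_mul]

private lemma key_integral (c : ℝ) (hc : 0 < c) :
    ∫ x : ℝ, rexp (-x) * rexp (-(c * rexp (-x))) = c⁻¹ := by
  have h := integral_image_eq_integral_abs_deriv_smul (MeasurableSet.univ (α := ℝ))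
    (gumbel_hasDerivWithinAt univ) (gumbel_injOn univ) (fun t => rexp (-(c * t)))
  rw [gumbel_image_univ, integral_Ioi_exp_neg_mul c 0 hc] at h
  simp only [mul_zero, neg_zero, Real.exp_zero, mul_one] at h
  calc ∫ x : ℝ, rexp (-x) * rexp (-(c * rexp (-x)))
      = ∫ x in (univ : Set ℝ), |(-rexp (-x))| • rexp (-(c * rexp (-x))) := by
        rw [Measure.restrict_univ]
        exact integral_congr_ae (Filter.Eventually.of_forall fun x => by
          simp [abs_of_pos (Real.exp_pos (-x)), smul_eq_mul])
    _ = c⁻¹ := h.symm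

set_option maxHeartbeats 800000 in
private lemma key_integrable (c : ℝ) (hc : 0 < c) :
    Integrable (fun x : ℝ => rexp (-x) * rexp (-(c * rexp (-x)))) := by
  have hiff := integrableOn_image_iff_integrableOn_abs_deriv_smul (MeasurableSet.univ (α := ℝ))
    (gumbel_hasDerivWithinAt univ) (gumbel_injOn univ) (fun t => rexp (-(c * t)))
  rw [gumbel_image_univ] at hiff
  have hint : IntegrableOn (fun t : ℝ => rexp (-(c * t))) (Ioi 0) := by
    simpa [neg_mul] using exp_neg_integrableOn_Ioi 0 hc
  have h2 := hiff.1 hint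
  rw [integrableOn_univ] at h2
  refine h2.congr (Filter.Eventually.of_forall fun x => ?_)
  simp [abs_of_pos (Real.exp_pos (-x)), smul_eq_mul]

private lemma key_lintegral (c : ℝ) (hc : 0 < c) :
    ∫⁻ x : ℝ, ENNReal.ofReal (rexp (-x) * rexp (-(c * rexp (-x)))) = ENNReal.ofReal c⁻¹ := by
  rw [← ofReal_integral_eq_lintegral_ofReal (key_integrable c hc)
    (Filter.Eventually.of_forall fun x => by positivity), key_integral c hc]

private lemma gumbel_dens_eq (x : ℝ) :
    rexp (-x - rexp (-x)) = rexp (-x) * rexp (-(1 * rexp (-x))) := by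
  rw [one_mul, ← Real.exp_add, sub_eq_add_neg]

private lemma gumbel_cdf (a : ℝ) :
    (volume.withDensity fun x => ENNReal.ofReal (rexp (-x - rexp (-x)))) (Iio a)
      = ENNReal.ofReal (rexp (-rexp (-a))) := by
  rw [withDensity_apply _ measurableSet_Iio]
  calc ∫⁻ x in Iio a, ENNReal.ofReal (rexp (-x - rexp (-x)))
      = ∫⁻ x in Iio a, ENNReal.ofReal (rexp (-x) * rexp (-(1 * rexp (-x)))) :=
        lintegral_congr fun x => by rw [gumbel_dens_eq]
    _ = ENNReal.ofReal (∫ x in Iio a, rexp (-x) * rexp (-(1 * rexp (-x)))) :=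
        (ofReal_integral_eq_lintegral_ofReal ((key_integrable 1 one_pos).integrableOn)
          (Filter.Eventually.of_forall fun x => by positivity)).symm
    _ = ENNReal.ofReal (rexp (-rexp (-a))) := by
        rw [key_setIntegral 1 a one_pos]; simp

private lemma gumbel_isProb :
    IsProbabilityMeasure (volume.withDensity fun x => ENNReal.ofReal (rexp (-x - rexp (-x)))) := by
  constructor
  rw [withDensity_apply _ MeasurableSet.univ, Measure.restrict_univ]
  calc ∫⁻ x : ℝ, ENNReal.ofReal (rexp (-x - rexp (-x)))
      = ∫⁻ x : ℝ, ENNReal.ofReal (rexp (-x) * rexp (-(1 * rexp (-x)))) :=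
        lintegral_congr fun x => by rw [gumbel_dens_eq]
    _ = ENNReal.ofReal 1⁻¹ := key_lintegral 1 one_pos
    _ = 1 := by simp


/-- For i.i.d. standard Gumbel errors, the discrete choice probabilities have the
multinomial logit closed form, both in the probabilistic form and the integral form. -/
theorem stmt2 (J : ℕ) (μ : Fin J → ℝ) (r : Fin J) :
    ((Measure.pi fun _ : Fin J =>
        volume.withDensity fun x => ENNReal.ofReal (Real.exp (-x - Real.exp (-x))))
      {ε : Fin J → ℝ | ∀ s, s ≠ r → μ s + ε s < μ r + ε r}).toReal =
        Real.exp (μ r) / ∑ s, Real.exp (μ s) ∧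
    ∫ ε : ℝ,
        (∏ s ∈ Finset.univ.erase r, Real.exp (-Real.exp (-(μ r - μ s + ε)))) *
          Real.exp (-ε - Real.exp (-ε)) =
      Real.exp (μ r) / ∑ s, Real.exp (μ s) := by
  obtain ⟨n, rfl⟩ : ∃ n, J = n + 1 := ⟨J - 1, (Nat.succ_pred_eq_of_pos r.pos).symm⟩
  set c : ℝ := ∑ s, rexp (μ s - μ r) with hc_def
  have hc : 0 < c := Finset.sum_pos (fun i _ => Real.exp_pos _) ⟨r, Finset.mem_univ r⟩
  have hcinv : c⁻¹ = rexp (μ r) / ∑ s, rexp (μ s) := by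
    have h : c = (∑ s, rexp (μ s)) / rexp (μ r) := by
      rw [hc_def, Finset.sum_div]
      exact Finset.sum_congr rfl fun s _ => (Real.exp_sub _ _)
    rw [h, inv_div]
  have hsum_erase : ∑ s ∈ Finset.univ.erase r, rexp (μ s - μ r) = c - 1 := by
    have h := Finset.add_sum_erase Finset.univ (fun s => rexp (μ s - μ r)) (Finset.mem_univ r)
    simp only [sub_self, Real.exp_zero] at h
    rw [hc_def, ← h]; ring
  have hsum_succAbove : ∑ j, rexp (μ (r.succAbove j) - μ r) = c - 1 := by
    have h := Fin.sum_univ_succAbove (fun s => rexp (μ s - μ r)) r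
    simp only [sub_self, Real.exp_zero] at h
    rw [hc_def, h]; ring
  have hfactor : ∀ (s : Fin (n + 1)) (x : ℝ),
      rexp (-rexp (-(μ r - μ s + x))) = rexp (-(rexp (μ s - μ r) * rexp (-x))) := by
    intro s x
    congr 1
    rw [neg_inj, ← Real.exp_add]
    congr 1
    ring
  -- Part 2
  have part2 : ∫ ε : ℝ,
      (∏ s ∈ Finset.univ.erase r, rexp (-rexp (-(μ r - μ s + ε)))) * rexp (-ε - rexp (-ε))
        = c⁻¹ := by
    have heq : ∀ ε : ℝ,
        (∏ s ∈ Finset.univ.erase r, rexp (-rexp (-(μ r - μ s + ε)))) * rexp (-ε - rexp (-ε))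
          = rexp (-ε) * rexp (-(c * rexp (-ε))) := by
      intro ε
      have h1 : (∏ s ∈ Finset.univ.erase r, rexp (-rexp (-(μ r - μ s + ε))))
          = rexp (∑ s ∈ Finset.univ.erase r, -(rexp (μ s - μ r) * rexp (-ε))) := by
        rw [Real.exp_sum]
        exact Finset.prod_congr rfl fun s _ => hfactor s ε
      have h2 : ∑ s ∈ Finset.univ.erase r, -(rexp (μ s - μ r) * rexp (-ε))
          = -((c - 1) * rexp (-ε)) := by
        rw [Finset.sum_neg_distrib, ← Finset.sum_mul, hsum_erase]
      rw [h1, h2, ← Real.exp_add, ← Real.exp_add]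
      congr 1
      ring
    rw [integral_congr_ae (Filter.Eventually.of_forall heq), key_integral c hc]
  -- Part 1
  have part1 : ((Measure.pi fun _ : Fin (n + 1) =>
        volume.withDensity fun x => ENNReal.ofReal (rexp (-x - rexp (-x))))
      {ε : Fin (n + 1) → ℝ | ∀ s, s ≠ r → μ s + ε s < μ r + ε r}).toReal = c⁻¹ := by
    set ν : Measure ℝ := volume.withDensity fun x => ENNReal.ofReal (rexp (-x - rexp (-x)))
      with hν
    haveI : IsProbabilityMeasure ν := gumbel_isProb
    set A : Set (ℝ × (Fin n → ℝ)) :=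
      {p | ∀ j, p.2 j < μ r - μ (r.succAbove j) + p.1} with hA
    have hAmeas : MeasurableSet A := by
      have hAeq : A = ⋂ j, {p : ℝ × (Fin n → ℝ) | p.2 j < μ r - μ (r.succAbove j) + p.1} := by
        ext p; simp [hA, Set.mem_iInter]
      rw [hAeq]
      exact MeasurableSet.iInter fun j =>
        measurableSet_lt (by fun_prop) (by fun_prop)
    have hpre : {ε : Fin (n + 1) → ℝ | ∀ s, s ≠ r → μ s + ε s < μ r + ε r}
        = (MeasurableEquiv.piFinSuccAbove (fun _ => ℝ) r) ⁻¹' A := by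
      ext ε
      simp only [Set.mem_setOf_eq, Set.mem_preimage, hA,
        MeasurableEquiv.piFinSuccAbove_apply, Fin.removeNth]
      constructor
      · intro h j
        have := h (r.succAbove j) (Fin.succAbove_ne r j)
        simp only [Fin.insertNthEquiv, Equiv.coe_fn_symm_mk, Fin.removeNth]
        linarith
      · intro h s hs
        obtain ⟨j, rfl⟩ := Fin.exists_succAbove_eq hs
        have := h j
        simp only [Fin.insertNthEquiv, Equiv.coe_fn_symm_mk, Fin.removeNth] at this
        linarith
    have hMP := measurePreserving_piFinSuccAbove (fun _ : Fin (n + 1) => ν) r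
    have h1 : (Measure.pi fun _ : Fin (n + 1) => ν)
          ((MeasurableEquiv.piFinSuccAbove (fun _ => ℝ) r) ⁻¹' A)
        = (ν.prod (Measure.pi fun _ : Fin n => ν)) A :=
      hMP.measure_preimage hAmeas.nullMeasurableSet
    have h2 : (ν.prod (Measure.pi fun _ : Fin n => ν)) A
        = ∫⁻ x, (Measure.pi fun _ : Fin n => ν) (Prod.mk x ⁻¹' A) ∂ν :=
      Measure.prod_apply hAmeas
    have h3 : ∀ x : ℝ, (Measure.pi fun _ : Fin n => ν) (Prod.mk x ⁻¹' A)
        = ∏ j, ENNReal.ofReal (rexp (-rexp (-(μ r - μ (r.succAbove j) + x)))) := by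
      intro x
      have hset : Prod.mk x ⁻¹' A = Set.pi Set.univ fun j => Iio (μ r - μ (r.succAbove j) + x) := by
        ext y; simp [hA, Set.mem_pi]
      rw [hset, Measure.pi_pi]
      exact Finset.prod_congr rfl fun j _ => gumbel_cdf _
    have hptwise : ∀ x : ℝ,
        ENNReal.ofReal (rexp (-x - rexp (-x)))
            * ∏ j, ENNReal.ofReal (rexp (-rexp (-(μ r - μ (r.succAbove j) + x))))
          = ENNReal.ofReal (rexp (-x) * rexp (-(c * rexp (-x)))) := by
      intro x
      rw [← ENNReal.ofReal_prod_of_nonneg (fun j _ => (Real.exp_pos _).le),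
        ← ENNReal.ofReal_mul (Real.exp_pos _).le]
      congr 1
      have hprod : ∏ j, rexp (-rexp (-(μ r - μ (r.succAbove j) + x)))
          = rexp (∑ j, -(rexp (μ (r.succAbove j) - μ r) * rexp (-x))) := by
        rw [Real.exp_sum]
        exact Finset.prod_congr rfl fun j _ => hfactor _ x
      have hsum : ∑ j, -(rexp (μ (r.succAbove j) - μ r) * rexp (-x))
          = -((c - 1) * rexp (-x)) := by
        rw [Finset.sum_neg_distrib, ← Finset.sum_mul, hsum_succAbove]
      rw [hprod, hsum, ← Real.exp_add, ← Real.exp_add]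
      congr 1
      ring
    have hmeasf : Measurable fun x : ℝ =>
        ∏ j, ENNReal.ofReal (rexp (-rexp (-(μ r - μ (r.succAbove j) + x)))) := by
      refine Finset.measurable_prod _ fun j _ => Measurable.ennreal_ofReal ?_
      fun_prop
    have h5 : ∫⁻ x, (∏ j, ENNReal.ofReal (rexp (-rexp (-(μ r - μ (r.succAbove j) + x))))) ∂ν
        = ENNReal.ofReal c⁻¹ := by
      rw [hν, lintegral_withDensity_eq_lintegral_mul _
        (Measurable.ennreal_ofReal (by fun_prop)) hmeasf]
      rw [show (fun x : ℝ => ((fun x => ENNReal.ofReal (rexp (-x - rexp (-x)))) *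
          fun x => ∏ j, ENNReal.ofReal (rexp (-rexp (-(μ r - μ (r.succAbove j) + x))))) x)
        = fun x : ℝ => ENNReal.ofReal (rexp (-x) * rexp (-(c * rexp (-x)))) from
        funext fun x => hptwise x]
      exact key_lintegral c hc
    rw [hpre, h1, h2, lintegral_congr h3, h5, ENNReal.toReal_ofReal (by positivity)]
  rw [hcinv] at part1 part2
  exact ⟨part1, part2⟩
end

section
/- Assume CCMV: for every r, E[U(L) | R=r, L_{(r)}] = E[U(L) | R=1, L_{(r)}] almost surely. Then E[ Σ_r 1(R=r) E(U(L) | R=1, L_{(r)}) ] = E[U(L)] (unbiasedness of the pattern-mixture estimating function). -/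
open Finset MeasureTheory

open Classical in
lemma le_pr_aux {Ω : Type*} [Fintype Ω] (P : Ω → ℝ) (hP : ∀ ω, 0 ≤ P ω)
    (E : Ω → Prop) (ω : Ω) (hω : E ω) : P ω ≤ pr P E := by
  calc P ω = if E ω then P ω else 0 := (if_pos hω).symm
    _ ≤ ∑ ω', if E ω' then P ω' else 0 :=
        Finset.single_le_sum (f := fun ω' => if E ω' then P ω' else 0) (fun i _ => by by_cases h : E i <;> simp [h, hP i])
          (Finset.mem_univ ω)

open Classical in
lemma sum_cex_aux {Ω : Type*} [Fintype Ω] (P : Ω → ℝ) (hP : ∀ ω, 0 ≤ P ω)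
    (V : Ω → ℝ) (s : Ω → Ω → Prop)
    (hrefl : ∀ ω, s ω ω) (hsymm : ∀ ω ω', s ω ω' → s ω' ω)
    (hcong : ∀ ω ω', s ω ω' → ∀ ω'', (s ω ω'' ↔ s ω' ω'')) :
    ∑ ω, P ω * cex P V (s ω) = ∑ ω, P ω * V ω := by
  have hD : ∀ ω ω', s ω ω' → pr P (s ω) = pr P (s ω') := by
    intro ω ω' h
    unfold pr
    exact Finset.sum_congr rfl fun ω'' _ => if_congr (hcong ω ω' h ω'') rfl rfl
  have hinner : ∀ ω', (∑ ω, P ω * ((if s ω ω' then P ω' * V ω' else 0) / pr P (s ω)))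
      = P ω' * V ω' := by
    intro ω'
    have h1 : ∀ ω, P ω * ((if s ω ω' then P ω' * V ω' else 0) / pr P (s ω)) =
        (if s ω' ω then P ω else 0) * (P ω' * V ω') / pr P (s ω') := by
      intro ω
      by_cases h : s ω ω'
      · rw [if_pos h, if_pos (hsymm _ _ h), hD _ _ h]
        ring
      · rw [if_neg h, if_neg (fun h' => h (hsymm _ _ h'))]
        simp
    rw [Finset.sum_congr rfl (fun ω _ => h1 ω), ← Finset.sum_div, ← Finset.sum_mul]
    have hpr : (∑ ω, if s ω' ω then P ω else 0) = pr P (s ω') := rfl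
    rw [hpr]
    by_cases hD0 : pr P (s ω') = 0
    · have hPω' : P ω' = 0 :=
        le_antisymm (hD0 ▸ le_pr_aux P hP (s ω') ω' (hrefl ω')) (hP ω')
      rw [hD0, hPω']; simp
    · rw [mul_comm, mul_div_assoc, div_self hD0, mul_one]
  calc ∑ ω, P ω * cex P V (s ω)
      = ∑ ω, ∑ ω', P ω * ((if s ω ω' then P ω' * V ω' else 0) / pr P (s ω)) := by
        refine Finset.sum_congr rfl fun ω _ => ?_
        unfold cex
        rw [Finset.sum_div, Finset.mul_sum]
    _ = ∑ ω', ∑ ω, P ω * ((if s ω ω' then P ω' * V ω' else 0) / pr P (s ω)) :=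
        Finset.sum_comm
    _ = ∑ ω', P ω' * V ω' := Finset.sum_congr rfl fun ω' _ => hinner ω'

/-- Unbiasedness of the pattern-mixture estimating function under CCMV:
`E[Σ_r 1(R=r) E(U(L) | R=1, L_(r))] = E[U(L)]`. Pattern `0` is the complete-case pattern
and observes everything (`O 0` injective). -/
theorem stmt8 {Ω A : Type*} [Fintype Ω] {J : ℕ} {B : Fin (J + 1) → Type*}
    (P : Ω → ℝ) (hP : ∀ ω, 0 ≤ P ω) (hPsum : ∑ ω, P ω = 1)
    (R : Ω → Fin (J + 1)) (L : Ω → A)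
    (O : (r : Fin (J + 1)) → A → B r) (hO0 : Function.Injective (O 0))
    (U : A → ℝ)
    (hpos : ∀ l : A, 0 < pr P (fun ω => L ω = l) →
      0 < pr P (fun ω => R ω = 0 ∧ L ω = l))
    (hCCMV : ∀ r, r ≠ 0 → ∀ b : B r,
      0 < pr P (fun ω => R ω = r ∧ O r (L ω) = b) →
      cex P (fun ω => U (L ω)) (fun ω => R ω = r ∧ O r (L ω) = b) =
        cex P (fun ω => U (L ω)) (fun ω => R ω = 0 ∧ O r (L ω) = b)) :
    ex P (fun ω =>
        cex P (fun ω' => U (L ω'))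
          (fun ω' => R ω' = 0 ∧ O (R ω) (L ω') = O (R ω) (L ω))) =
      ex P (fun ω => U (L ω)) := by
  classical
  have step1 : ∀ ω : Ω, P ω *
      cex P (fun ω' => U (L ω')) (fun ω' => R ω' = 0 ∧ O (R ω) (L ω') = O (R ω) (L ω)) =
      P ω * cex P (fun ω' => U (L ω'))
        (fun ω' => R ω' = R ω ∧ O (R ω) (L ω') = O (R ω) (L ω)) := by
    intro ω
    rcases (hP ω).eq_or_lt with h0 | h0
    · rw [← h0, zero_mul, zero_mul]
    · by_cases hr : R ω = 0
      · congr 2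
        simp [hr]
      · have hb : 0 < pr P (fun ω' => R ω' = R ω ∧ O (R ω) (L ω') = O (R ω) (L ω)) :=
          lt_of_lt_of_le h0 (le_pr_aux P hP _ ω ⟨rfl, rfl⟩)
        rw [← hCCMV (R ω) hr (O (R ω) (L ω)) hb]
  unfold ex
  simp only []
  rw [Finset.sum_congr rfl (fun ω _ => step1 ω)]
  exact sum_cex_aux P hP (fun ω => U (L ω))
    (fun ω ω' => R ω' = R ω ∧ O (R ω) (L ω') = O (R ω) (L ω))
    (fun ω => ⟨rfl, rfl⟩)
    (fun ω ω' h => ⟨h.1.symm, by rw [h.1]; exact h.2.symm⟩)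
    (fun ω ω' h ω'' => by
      obtain ⟨h1, h2⟩ := h
      constructor
      · rintro ⟨ha, hb⟩
        exact ⟨ha.trans h1.symm, by rw [h1]; exact hb.trans h2.symm⟩
      · rintro ⟨ha, hb⟩
        refine ⟨ha.trans h1, ?_⟩
        rw [h1] at hb
        exact hb.trans h2)
end

section
/- Under the LDCM, the complete-case probability satisfies π_1(L) = (1 + Σ_{s≠1} Odds_s(L_{(s)}))^{-1}; consequently, for a function U of L, the IPW complete-case estimating function equals 1(R=1)·U(L)·(1 + Σ_{s≠1} Odds_s(L_{(s)})), and its expectation equals E[U(L)]. -/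
open Finset MeasureTheory

/-- Under the LDCM, the complete-case probability is
`π₁(L) = (1 + Σ_{s≠1} Odds_s(L_(s)))⁻¹`, and consequently the IPW complete-case estimating
function `1(R=1)·U(L)·(1 + Σ_{s≠1} Odds_s(L_(s)))` has expectation `E[U(L)]`.
Pattern `0` is the complete-case pattern. -/
theorem stmt14 {Ω A : Type*} [Fintype Ω] {J : ℕ} {B : Fin (J + 1) → Type*}
    (P : Ω → ℝ) (hP : ∀ ω, 0 ≤ P ω) (hPsum : ∑ ω, P ω = 1)
    (R : Ω → Fin (J + 1)) (L : Ω → A)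
    (O : (r : Fin (J + 1)) → A → B r)
    (Odds : (r : Fin (J + 1)) → B r → ℝ) (hOdds : ∀ r b, 0 < Odds r b)
    (hLDCM : ∀ r, r ≠ 0 → ∀ l : A, 0 < pr P (fun ω => L ω = l) →
      cpr P (fun ω => R ω = r) (fun ω => L ω = l) =
        Odds r (O r l) / (1 + ∑ s ∈ Finset.univ.erase (0 : Fin (J + 1)), Odds s (O s l)))
    (U : A → ℝ) :
    (∀ l : A, 0 < pr P (fun ω => L ω = l) →
      cpr P (fun ω => R ω = 0) (fun ω => L ω = l) =
        (1 + ∑ s ∈ Finset.univ.erase (0 : Fin (J + 1)), Odds s (O s l))⁻¹) ∧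
    ex P (fun ω =>
        (if R ω = 0 then 1 else 0) * U (L ω) *
          (1 + ∑ s ∈ Finset.univ.erase (0 : Fin (J + 1)), Odds s (O s (L ω)))) =
      ex P (fun ω => U (L ω)) := by
  classical
  set S : A → ℝ := fun l => 1 + ∑ s ∈ Finset.univ.erase (0 : Fin (J + 1)), Odds s (O s l)
    with hSdef
  have hSpos : ∀ l, 0 < S l := by
    intro l
    have h : 0 ≤ ∑ s ∈ Finset.univ.erase (0 : Fin (J + 1)), Odds s (O s l) :=
      Finset.sum_nonneg fun s _ => (hOdds s _).le
    simp only [hSdef]; linarith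
  have key : ∀ l : A, 0 < pr P (fun ω => L ω = l) →
      cpr P (fun ω => R ω = 0) (fun ω => L ω = l) = (S l)⁻¹ := by
    intro l hl
    have hne : pr P (fun ω => L ω = l) ≠ 0 := hl.ne'
    have hSne : S l ≠ 0 := (hSpos l).ne'
    have hsum : ∑ r : Fin (J + 1), pr P (fun ω => R ω = r ∧ L ω = l) =
        pr P (fun ω => L ω = l) := by
      unfold pr
      rw [Finset.sum_comm]
      refine Finset.sum_congr rfl fun ω _ => ?_
      by_cases h : L ω = l <;> simp [h]
    have h0 : pr P (fun ω => R ω = 0 ∧ L ω = l) =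
        pr P (fun ω => L ω = l) -
          ∑ r ∈ Finset.univ.erase (0 : Fin (J + 1)), pr P (fun ω => R ω = r ∧ L ω = l) := by
      rw [← hsum, ← Finset.add_sum_erase _ _ (Finset.mem_univ (0 : Fin (J + 1)))]
      ring
    have hterm : ∀ r ∈ Finset.univ.erase (0 : Fin (J + 1)),
        pr P (fun ω => R ω = r ∧ L ω = l) =
          Odds r (O r l) / S l * pr P (fun ω => L ω = l) := by
      intro r hr
      have hrne : r ≠ 0 := (Finset.mem_erase.mp hr).1
      have h := hLDCM r hrne l hl
      unfold cpr at h
      exact (div_eq_iff hne).mp h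
    unfold cpr
    rw [h0, Finset.sum_congr rfl hterm, ← Finset.sum_mul, ← Finset.sum_div]
    have hS1 : ∑ r ∈ Finset.univ.erase (0 : Fin (J + 1)), Odds r (O r l) = S l - 1 := by
      simp [hSdef]
    rw [hS1]
    field_simp
    ring
  refine ⟨key, ?_⟩
  unfold ex
  have hmap : ∀ ω ∈ (Finset.univ : Finset Ω), L ω ∈ Finset.univ.image L :=
    fun ω _ => Finset.mem_image_of_mem _ (Finset.mem_univ ω)
  rw [← Finset.sum_fiberwise_of_maps_to hmap, ← Finset.sum_fiberwise_of_maps_to hmap]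
  refine Finset.sum_congr rfl fun l _ => ?_
  have hprL : pr P (fun ω => L ω = l) =
      ∑ ω ∈ Finset.univ.filter (fun ω => L ω = l), P ω := by
    unfold pr
    rw [Finset.sum_filter]
  by_cases hl : 0 < pr P (fun ω => L ω = l)
  · have hne : pr P (fun ω => L ω = l) ≠ 0 := hl.ne'
    have hpr0 : pr P (fun ω => R ω = 0 ∧ L ω = l) = (S l)⁻¹ * pr P (fun ω => L ω = l) := by
      have h := key l hl
      unfold cpr at h
      exact (div_eq_iff hne).mp h
    have hfib0 : ∑ ω ∈ Finset.univ.filter (fun ω => L ω = l),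
        (if R ω = 0 then P ω else 0) = pr P (fun ω => R ω = 0 ∧ L ω = l) := by
      unfold pr
      rw [Finset.sum_filter]
      refine Finset.sum_congr rfl fun ω _ => ?_
      by_cases h1 : L ω = l <;> by_cases h2 : R ω = 0 <;> simp [h1, h2]
    calc ∑ ω ∈ Finset.univ.filter (fun ω => L ω = l),
          P ω * ((if R ω = 0 then (1:ℝ) else 0) * U (L ω) *
            (1 + ∑ s ∈ Finset.univ.erase (0 : Fin (J + 1)), Odds s (O s (L ω))))
        = ∑ ω ∈ Finset.univ.filter (fun ω => L ω = l),
            (if R ω = 0 then P ω else 0) * (U l * S l) := by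
          refine Finset.sum_congr rfl fun ω hω => ?_
          have hLω : L ω = l := (Finset.mem_filter.mp hω).2
          by_cases h2 : R ω = 0 <;> simp [hLω, h2, hSdef] <;> ring
      _ = pr P (fun ω => R ω = 0 ∧ L ω = l) * (U l * S l) := by
          rw [← Finset.sum_mul, hfib0]
      _ = pr P (fun ω => L ω = l) * U l * ((S l)⁻¹ * S l) := by
          rw [hpr0]; ring
      _ = pr P (fun ω => L ω = l) * U l := by
          rw [inv_mul_cancel₀ (hSpos l).ne', mul_one]
      _ = ∑ ω ∈ Finset.univ.filter (fun ω => L ω = l), P ω * U (L ω) := by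
          rw [hprL, Finset.sum_mul]
          refine Finset.sum_congr rfl fun ω hω => ?_
          rw [(Finset.mem_filter.mp hω).2]
  · have hz : ∀ ω ∈ Finset.univ.filter (fun ω => L ω = l), P ω = 0 := by
      intro ω hω
      have hge : 0 ≤ pr P (fun ω => L ω = l) := by
        rw [hprL]; exact Finset.sum_nonneg fun ω _ => hP ω
      have heq : pr P (fun ω => L ω = l) = 0 := le_antisymm (not_lt.mp hl) hge
      rw [hprL] at heq
      exact (Finset.sum_eq_zero_iff_of_nonneg fun ω _ => hP ω).mp heq ω hω
    rw [Finset.sum_eq_zero fun ω hω => by rw [hz ω hω]; ring,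
        Finset.sum_eq_zero fun ω hω => by rw [hz ω hω]; ring]
end

section
/- Variation independence under CCMV: In the parametrization of the joint law of (R, L) by the pair ( {Odds_r(·) : r ≠ 1}, f(·|R=1) ) via f(R=r, L=l) ∝ Odds_r(l_{(r)}) f(l|R=1) (with Odds_1 ≡ 1), every choice of positive functions Odds_r of l_{(r)} (r ≠ 1) and every probability mass function f(·|R=1) on the range of L yields a valid joint probability mass function for (R, L) satisfying the LDCM and positivity. Hence the two components are variation independent. -/
/-- Variation independence under CCMV: given arbitrary positive odds
functions `Odds_r` of the observed coordinates (with `Odds` identically 1 for the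
complete-case pattern `0`) and an arbitrary pmf `q` on the range of `L`, the assignment
`p(r, l) = Odds_r(l_(r)) q(l) / C` is a valid joint pmf for `(R, L)` whose complete-case
law is `q`, whose odds are the `Odds_r`, and whose complete-case probability is positive
on the support of `q`. -/
theorem stmt16 {A : Type*} [Fintype A] {J : ℕ} {B : Fin (J + 1) → Type*}
    (O : (r : Fin (J + 1)) → A → B r)
    (Odds : (r : Fin (J + 1)) → B r → ℝ)
    (hOdds0 : ∀ b : B 0, Odds 0 b = 1)
    (hOdds : ∀ r b, 0 < Odds r b)
    (q : A → ℝ) (hq : ∀ l, 0 ≤ q l) (hqsum : ∑ l, q l = 1) :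
    (∀ (r : Fin (J + 1)) (l : A),
        0 ≤ Odds r (O r l) * q l / ∑ r' : Fin (J + 1), ∑ l' : A, Odds r' (O r' l') * q l') ∧
    (∑ r : Fin (J + 1), ∑ l : A,
        Odds r (O r l) * q l / ∑ r' : Fin (J + 1), ∑ l' : A, Odds r' (O r' l') * q l') = 1 ∧
    (∀ l : A,
        (Odds 0 (O 0 l) * q l / ∑ r' : Fin (J + 1), ∑ l' : A, Odds r' (O r' l') * q l') /
          (∑ l'' : A,
            Odds 0 (O 0 l'') * q l'' / ∑ r' : Fin (J + 1), ∑ l' : A, Odds r' (O r' l') * q l') =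
        q l) ∧
    (∀ (r : Fin (J + 1)) (l : A), 0 < q l →
        (Odds r (O r l) * q l / ∑ r' : Fin (J + 1), ∑ l' : A, Odds r' (O r' l') * q l') /
          (Odds 0 (O 0 l) * q l / ∑ r' : Fin (J + 1), ∑ l' : A, Odds r' (O r' l') * q l') =
          Odds r (O r l) ∧
        0 < Odds 0 (O 0 l) * q l / ∑ r' : Fin (J + 1), ∑ l' : A, Odds r' (O r' l') * q l') := by

  set C : ℝ := ∑ r' : Fin (J + 1), ∑ l' : A, Odds r' (O r' l') * q l' with hC
  have hterm : ∀ (r : Fin (J + 1)) (l : A), 0 ≤ Odds r (O r l) * q l := fun r l =>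
    mul_nonneg (hOdds r _).le (hq l)
  have hCpos : 0 < C := by
    have h1 : (1:ℝ) = ∑ l : A, Odds 0 (O 0 l) * q l := by
      rw [← hqsum]; exact Finset.sum_congr rfl fun l _ => by rw [hOdds0]; ring
    have h2 : ∑ l : A, Odds 0 (O 0 l) * q l ≤ C := by
      rw [hC]
      exact Finset.single_le_sum (f := fun r => ∑ l : A, Odds r (O r l) * q l)
        (fun r _ => Finset.sum_nonneg fun l _ => hterm r l) (Finset.mem_univ 0)
    linarith
  have hCne : C ≠ 0 := ne_of_gt hCpos
  refine ⟨fun r l => div_nonneg (hterm r l) hCpos.le, ?_, ?_, ?_⟩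
  · simp_rw [← Finset.sum_div]
    exact div_self hCne
  · intro l
    have hden : (∑ l'' : A, Odds 0 (O 0 l'') * q l'' / C) = 1 / C := by
      rw [← Finset.sum_div]
      congr 1
      rw [← hqsum]; exact Finset.sum_congr rfl fun l _ => by rw [hOdds0]; ring
    rw [hden, hOdds0, one_mul]
    field_simp
  · intro r l hql
    constructor
    · rw [hOdds0, one_mul]
      field_simp
    · rw [hOdds0, one_mul]
      exact div_pos hql hCpos
end

section
/- Sensitivity analysis identity: Suppose for each r ≠ 1 there is a known positive 'selection bias' function θ_r(L) such that P(R=r|L)/P(R=1|L) = θ_r(L) · Odds_r(L_{(r)}) for some positive function Odds_r of L_{(r)}. Then π_1(L) = P(R=1|L) = (1 + Σ_{r≠1} θ_r(L)·Odds_r(L_{(r)}))^{-1}, and for integrable U, E[ 1(R=1)·U(L)·(1 + Σ_{r≠1} θ_r(L)·Odds_r(L_{(r)})) ] = E[U(L)]. -/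
open Finset MeasureTheory

/-- Sensitivity analysis identity: if for each incomplete pattern `r` the
odds of pattern `r` versus complete cases factor as `θ_r(l) · Odds_r(l_(r))` with known
positive selection-bias functions `θ_r`, then
`π₁(L) = (1 + Σ_{r≠1} θ_r(L)·Odds_r(L_(r)))⁻¹` and the corresponding IPW estimating
function is unbiased for `E[U(L)]`. Pattern `0` is the complete-case pattern. -/
theorem stmt17 {Ω A : Type*} [Fintype Ω] {J : ℕ} {B : Fin (J + 1) → Type*}
    (P : Ω → ℝ) (hP : ∀ ω, 0 ≤ P ω) (hPsum : ∑ ω, P ω = 1)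
    (R : Ω → Fin (J + 1)) (L : Ω → A)
    (O : (r : Fin (J + 1)) → A → B r)
    (θ : Fin (J + 1) → A → ℝ) (hθ : ∀ r l, 0 < θ r l)
    (Odds : (r : Fin (J + 1)) → B r → ℝ) (hOdds : ∀ r b, 0 < Odds r b)
    (hpos : ∀ l : A, 0 < pr P (fun ω => L ω = l) →
      0 < cpr P (fun ω => R ω = 0) (fun ω => L ω = l))
    (hsel : ∀ r, r ≠ 0 → ∀ l : A, 0 < pr P (fun ω => L ω = l) →
      cpr P (fun ω => R ω = r) (fun ω => L ω = l) =
        θ r l * Odds r (O r l) * cpr P (fun ω => R ω = 0) (fun ω => L ω = l))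
    (U : A → ℝ) :
    (∀ l : A, 0 < pr P (fun ω => L ω = l) →
      cpr P (fun ω => R ω = 0) (fun ω => L ω = l) =
        (1 + ∑ r ∈ Finset.univ.erase (0 : Fin (J + 1)), θ r l * Odds r (O r l))⁻¹) ∧
    ex P (fun ω =>
        (if R ω = 0 then 1 else 0) * U (L ω) *
          (1 + ∑ r ∈ Finset.univ.erase (0 : Fin (J + 1)),
            θ r (L ω) * Odds r (O r (L ω)))) =
      ex P (fun ω => U (L ω)) := by
  classical
  set S : A → ℝ := fun l =>
    1 + ∑ r ∈ Finset.univ.erase (0 : Fin (J + 1)), θ r l * Odds r (O r l) with hS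
  have hSpos : ∀ l, 0 < S l := by
    intro l
    have h : 0 ≤ ∑ r ∈ Finset.univ.erase (0 : Fin (J + 1)), θ r l * Odds r (O r l) :=
      Finset.sum_nonneg fun r _ => le_of_lt (mul_pos (hθ r l) (hOdds r (O r l)))
    simp only [hS]; linarith
  have key : ∀ l : A, 0 < pr P (fun ω => L ω = l) →
      cpr P (fun ω => R ω = 0) (fun ω => L ω = l) = (S l)⁻¹ := by
    intro l hl
    have hsum : ∑ r : Fin (J + 1), pr P (fun ω => R ω = r ∧ L ω = l) =
        pr P (fun ω => L ω = l) := by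
      unfold pr
      rw [Finset.sum_comm]
      refine Finset.sum_congr rfl fun ω _ => ?_
      by_cases h : L ω = l <;> simp [h]
    have hcsum : ∑ r : Fin (J + 1), cpr P (fun ω => R ω = r) (fun ω => L ω = l) = 1 := by
      unfold cpr
      rw [← Finset.sum_div, hsum, div_self hl.ne']
    rw [← Finset.sum_erase_add _ _ (Finset.mem_univ (0 : Fin (J + 1)))] at hcsum
    have hrw : ∑ r ∈ Finset.univ.erase (0 : Fin (J + 1)),
        cpr P (fun ω => R ω = r) (fun ω => L ω = l) =
        (∑ r ∈ Finset.univ.erase (0 : Fin (J + 1)), θ r l * Odds r (O r l)) *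
          cpr P (fun ω => R ω = 0) (fun ω => L ω = l) := by
      rw [Finset.sum_mul]
      refine Finset.sum_congr rfl fun r hr => ?_
      exact hsel r (Finset.ne_of_mem_erase hr) l hl
    rw [hrw] at hcsum
    have hcS : cpr P (fun ω => R ω = 0) (fun ω => L ω = l) * S l = 1 := by
      simp only [hS]; linear_combination hcsum
    exact eq_inv_of_mul_eq_one_left hcS
  refine ⟨fun l hl => key l hl, ?_⟩
  unfold ex
  rw [← Finset.sum_fiberwise_of_maps_to (fun ω _ => Finset.mem_image_of_mem L (Finset.mem_univ ω))
    (fun ω => P ω * ((if R ω = 0 then (1:ℝ) else 0) * U (L ω) * S (L ω))),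
    ← Finset.sum_fiberwise_of_maps_to (fun ω _ => Finset.mem_image_of_mem L (Finset.mem_univ ω))
    (fun ω => P ω * U (L ω))]
  refine Finset.sum_congr rfl fun l _ => ?_
  by_cases hl : 0 < pr P (fun ω => L ω = l)
  · have hc := key l hl
    unfold cpr at hc
    rw [div_eq_iff hl.ne'] at hc
    have e1 : ∑ ω ∈ Finset.univ.filter (fun ω => L ω = l),
        P ω * ((if R ω = 0 then (1:ℝ) else 0) * U (L ω) * S (L ω)) =
        U l * S l * pr P (fun ω => R ω = 0 ∧ L ω = l) := by
      unfold pr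
      rw [Finset.mul_sum, Finset.sum_filter]
      refine Finset.sum_congr rfl fun ω _ => ?_
      by_cases h1 : L ω = l
      · by_cases h2 : R ω = 0 <;> simp [h1, h2] <;> ring
      · simp [h1]
    have e2 : ∑ ω ∈ Finset.univ.filter (fun ω => L ω = l),
        P ω * U (L ω) = U l * pr P (fun ω => L ω = l) := by
      unfold pr
      rw [Finset.mul_sum, Finset.sum_filter]
      refine Finset.sum_congr rfl fun ω _ => ?_
      by_cases h1 : L ω = l <;> simp [h1] <;> ring
    rw [e1, e2, hc, mul_assoc, ← mul_assoc (S l), mul_inv_cancel₀ (hSpos l).ne', one_mul]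
  · have hz : pr P (fun ω => L ω = l) = 0 := by
      have hnn : 0 ≤ pr P (fun ω => L ω = l) :=
        Finset.sum_nonneg fun ω _ => by by_cases h : L ω = l <;> simp [pr, h, hP ω]
      linarith [lt_or_eq_of_le hnn |>.resolve_left (fun h => hl h)]
    have hzero : ∀ ω ∈ Finset.univ.filter (fun ω => L ω = l), P ω = 0 := by
      intro ω hω
      have hωl : L ω = l := (Finset.mem_filter.mp hω).2
      have := (Finset.sum_eq_zero_iff_of_nonneg
        (fun ω _ => by by_cases h : L ω = l <;> simp [h, hP ω])).mp hz ω (Finset.mem_univ ω)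
      simpa [hωl] using this
    rw [Finset.sum_eq_zero fun ω hω => by rw [hzero ω hω]; ring,
      Finset.sum_eq_zero fun ω hω => by rw [hzero ω hω]; ring]
end
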